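/- For a pointed space (X,x), the path-space fibration p : PX → X, p(ω) = ω(1), where PX = {ω : I → X : ω(0) = x} with the compact-open topology, induces an isomorphism of quasitopological groups π_n^{qtop}(X,x) ≅ π_{n−1}^{qtop}(Ω(X,x), e_x) for all n ≥ 2, and a bijection π_1^{qtop}(X,x) ≅ π_0^{qtop}(Ω(X,x)). -/

import Mathlib

/-!
A homotopy rel `∂Iⁿ` between two `n`-cubes is the same thing as a path between them in the
iterated loop space `Ωⁿ(X,x)`, so `πₙ^{qtop}(X,x)` is the quotient of `Ωⁿ(X,x)` by `Joined`,
that is `π₀^{qtop}(Ωⁿ(X,x))`; for `n = 1` this is the claimed bijection. Consequently any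
homeomorphism of iterated loop spaces descends to a homeomorphism of the homotopy groups. For
`n ≥ 2`, currying off the first cube coordinate is such a homeomorphism
`Ωⁿ(X,x) ≃ₜ Ωⁿ⁻¹(Ω(X,x))`, and it turns concatenation along the second coordinate of the cube
into concatenation along the first outer coordinate, so it also respects the group law.
-/

open Topology.Homotopy unitInterval

noncomputable section

/-- The quotient topology on `πₙ(X,x)` making it `πₙ^{qtop}(X,x)`. -/
instance piQTop (N X : Type*) [TopologicalSpace X] (x : X) :
    TopologicalSpace (HomotopyGroup N X x) :=
  inferInstanceAs (TopologicalSpace (Quotient _))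

/-- The quotient topology on `π₀(X)` (path components), making it `π₀^{qtop}(X)`. -/
instance pi0QTop (X : Type*) [TopologicalSpace X] :
    TopologicalSpace (ZerothHomotopy X) :=
  inferInstanceAs (TopologicalSpace (Quotient _))

open Topology

namespace GenLoop

variable {N X : Type*} [TopologicalSpace X] {x : X}

theorem homotopic_iff_joined {f g : Ω^ N X x} : Homotopic f g ↔ Joined f g := by
  constructor
  · rintro ⟨H⟩
    exact ⟨⟨⟨fun τ => ⟨H.toContinuousMap.curry τ, fun s hs => (H.eq_fst τ hs).trans (f.2 s hs)⟩,
      H.toContinuousMap.curry.continuous.subtype_mk _⟩,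
      GenLoop.ext _ _ H.apply_zero, GenLoop.ext _ _ H.apply_one⟩⟩
  · rintro ⟨γ⟩
    exact ⟨⟨⟨⟨fun p => γ p.1 p.2, by fun_prop⟩, fun s => by simp, fun s => by simp⟩,
      fun τ s hs => ((γ τ).2 s hs).trans (f.2 s hs).symm⟩⟩

theorem congr_apply {M : Type*} (e : M ≃ N) (f : Ω^ M X x) (t : I^N) :
    congr x e f t = f (t ∘ e) :=
  rfl

theorem congr_transAt {M : Type*} [DecidableEq M] [DecidableEq N] (e : M ≃ N) (i : M)
    (f g : Ω^ M X x) :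
    congr x e (transAt i f g) = transAt (e i) (congr x e f) (congr x e g) := by
  ext t
  simp only [congr_apply, transAt, coe_copy, Function.comp_apply, Function.update_comp_equiv,
    Equiv.symm_apply_apply]

theorem genLoopGenLoopEquiv_symm_apply_apply {M : Type*} (f : Ω^ (M ⊕ N) X x) (t : I^M)
    (s : I^N) : (genLoopGenLoopEquiv x).symm f t s = f (Sum.elim t s) :=
  currySum_apply_inl_inr x f (Sum.elim t s)

theorem genLoopGenLoopEquiv_symm_transAt {M : Type*} [DecidableEq M] [DecidableEq N] (j : M)
    (f g : Ω^ (M ⊕ N) X x) :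
    (genLoopGenLoopEquiv x).symm (transAt (Sum.inl j) f g) =
      transAt j ((genLoopGenLoopEquiv x).symm f) ((genLoopGenLoopEquiv x).symm g) := by
  ext t s
  simp only [genLoopGenLoopEquiv_symm_apply_apply, transAt, coe_copy, Sum.elim_inl,
    Sum.update_elim_inl]
  split_ifs <;> rfl

end GenLoop

namespace Homeomorph

variable {N M X Y : Type*} [TopologicalSpace X] [TopologicalSpace Y] {x : X} {y : Y}

theorem joined_iff (e : X ≃ₜ Y) {a b : X} : Joined (e a) (e b) ↔ Joined a b :=
  ⟨fun h => by simpa using h.map e.symm.continuous, fun h => h.map e.continuous⟩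

def homotopyGroupCongr (Φ : Ω^ N X x ≃ₜ Ω^ M Y y) :
    HomotopyGroup N X x ≃ₜ HomotopyGroup M Y y :=
  Homeomorph.Quotient.congr Φ fun f g => by
    show GenLoop.Homotopic f g ↔ GenLoop.Homotopic (Φ f) (Φ g)
    rw [GenLoop.homotopic_iff_joined, GenLoop.homotopic_iff_joined, Φ.joined_iff]

theorem homotopyGroupCongr_mk (Φ : Ω^ N X x ≃ₜ Ω^ M Y y) (f : Ω^ N X x) :
    Φ.homotopyGroupCongr ⟦f⟧ = ⟦Φ f⟧ :=
  rfl

theorem homotopyGroupCongr_mul [DecidableEq N] [Nonempty N] [DecidableEq M] [Nonempty M]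
    (Φ : Ω^ N X x ≃ₜ Ω^ M Y y) {i : N} {j : M}
    (hΦ : ∀ f g, Φ (GenLoop.transAt i f g) = GenLoop.transAt j (Φ f) (Φ g))
    (a b : HomotopyGroup N X x) :
    Φ.homotopyGroupCongr (a * b) = Φ.homotopyGroupCongr a * Φ.homotopyGroupCongr b := by
  induction a using Quotient.ind with | _ f =>
  induction b using Quotient.ind with | _ g =>
  exact (congrArg Φ.homotopyGroupCongr HomotopyGroup.mul_spec).trans
    ((congrArg (Quotient.mk _) (hΦ g f)).trans HomotopyGroup.mul_spec.symm)

end Homeomorph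

def HomotopyGroup.homeomorphZerothHomotopy (N : Type*) {X : Type*} [TopologicalSpace X] (x : X) :
    HomotopyGroup N X x ≃ₜ ZerothHomotopy (Ω^ N X x) :=
  Homeomorph.Quotient.congrRight fun _ _ => GenLoop.homotopic_iff_joined

/-- The first `k` coordinates go to the right summand because `genLoopGenLoopEquiv` makes the
right summand the inner loop coordinates. -/
def finCongrSumSwap {n k l : ℕ} (h : n = k + l) : Fin n ≃ Fin l ⊕ Fin k :=
  (finCongr h).trans (finSumFinEquiv.symm.trans (Equiv.sumComm _ _))

theorem finCongrSumSwap_natAdd {n k l : ℕ} (h : n = k + l) (j : Fin l) :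
    finCongrSumSwap h (Fin.cast h.symm (Fin.natAdd k j)) = Sum.inl j := by
  simp [finCongrSumSwap]

theorem sumElim_comp_finCongrSumSwap {α : Type*} {n k l : ℕ} (h : n = k + l) (s : Fin k → α)
    (t : Fin l → α) :
    Sum.elim t s ∘ finCongrSumSwap h = fun i => Fin.append s t (Fin.cast h i) := by
  ext i
  simp only [Function.comp_apply, finCongrSumSwap, Equiv.trans_apply, finCongr_apply]
  induction Fin.cast h i using Fin.addCases <;> simp

namespace GenLoop

variable {X : Type*} [TopologicalSpace X] {x : X} {n k l : ℕ}

def curryFin (h : n = k + l) : Ω^ (Fin n) X x ≃ₜ Ω^ (Fin l) (Ω^ (Fin k) X x) const :=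
  (congr x (finCongrSumSwap h)).trans (genLoopGenLoopEquiv x).symm

theorem curryFin_apply (h : n = k + l) (f : Ω^ (Fin n) X x) (t : I^(Fin l)) (s : I^(Fin k)) :
    curryFin h f t s = f fun i => Fin.append s t (Fin.cast h i) := by
  rw [curryFin, Homeomorph.trans_apply, genLoopGenLoopEquiv_symm_apply_apply, congr_apply,
    sumElim_comp_finCongrSumSwap]

theorem curryFin_transAt (h : n = k + l) (j : Fin l) (f g : Ω^ (Fin n) X x) :
    curryFin h (transAt (Fin.cast h.symm (Fin.natAdd k j)) f g) =
      transAt j (curryFin h f) (curryFin h g) := by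
  rw [curryFin, Homeomorph.trans_apply, congr_transAt, finCongrSumSwap_natAdd,
    genLoopGenLoopEquiv_symm_transAt]
  rfl

end GenLoop

/-- For a pointed space `(X,x)`, the path-space fibration `p : PX → X`, `p(ω) = ω(1)`,
with contractible total space `PX` and fiber the loop space `Ω(X,x)` (modelled as
`GenLoop (Fin 1) X x` with the compact-open topology), induces an isomorphism of
quasitopological groups `πₙ^{qtop}(X,x) ≅ π_{n-1}^{qtop}(Ω(X,x), e_x)` for all `n ≥ 2`
(written `n = m + 2`), given on representatives by currying off the loop coordinate,
and a bijection `π₁^{qtop}(X,x) ≅ π₀^{qtop}(Ω(X,x))` sending the homotopy class of a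
loop to its path component. -/
theorem stmt16 (X : Type) [TopologicalSpace X] (x : X) :
    (∀ m : ℕ, ∃ e : HomotopyGroup (Fin (m + 2)) X x ≃
        HomotopyGroup (Fin (m + 1)) (GenLoop (Fin 1) X x) GenLoop.const,
      (∀ (f : GenLoop (Fin (m + 2)) X x)
        (g : GenLoop (Fin (m + 1)) (GenLoop (Fin 1) X x) GenLoop.const),
        (∀ (t : Fin (m + 1) → I) (s : Fin 1 → I),
          (g t) s = f (fun i => Fin.append s t (Fin.cast (by omega) i))) →
        e ⟦f⟧ = ⟦g⟧) ∧
      (∀ a b, e (a * b) = e a * e b) ∧ IsHomeomorph e) ∧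
    ∃ e₁ : HomotopyGroup (Fin 1) X x ≃ ZerothHomotopy (GenLoop (Fin 1) X x),
      ∀ γ : GenLoop (Fin 1) X x, e₁ ⟦γ⟧ = ⟦γ⟧ := by
  refine ⟨fun m => ?_, (HomotopyGroup.homeomorphZerothHomotopy (Fin 1) x).toEquiv, fun _ => rfl⟩
  let Φ := GenLoop.curryFin (x := x) (show m + 2 = 1 + (m + 1) by omega)
  refine ⟨Φ.homotopyGroupCongr.toEquiv, fun f g hg => ?_,
    Φ.homotopyGroupCongr_mul (GenLoop.curryFin_transAt _ 0), Φ.homotopyGroupCongr.isHomeomorph⟩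
  have hΦ : Φ f = g := GenLoop.ext _ _ fun t => GenLoop.ext _ _ fun s => by
    rw [GenLoop.curryFin_apply, hg]
  exact (Φ.homotopyGroupCongr_mk f).trans (congrArg _ hΦ)
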